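/- arXiv:solv-int/9902016 — 18 statements merged into one kernel-verified Lean document; each statement's English description precedes it below -/
import Mathlib

section
/- Let u : ℤ → ℝ → ℝ be a family of differentiable functions satisfying the lattice u_{i+1}'(x) − u_i'(x) = u_{i+1}(x)² − u_i(x)² for all i ∈ ℤ and x ∈ ℝ. Fix i ∈ ℤ and let x ∈ ℝ be a point where u_i(x) ≠ u_{i+3}(x) and u_{i+1}(x) ≠ u_{i+2}(x). Then the function X(x) = (u_i(x) − u_{i+2}(x))(u_{i+1}(x) − u_{i+3}(x)) / ((u_i(x) − u_{i+3}(x))(u_{i+1}(x) − u_{i+2}(x))) has derivative zero at x. -/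
/-- For the coupled Riccati lattice `u_{i+1,x} - u_{i,x} = u_{i+1}^2 - u_i^2`,
the cross-ratio `X = (u_i - u_{i+2})(u_{i+1} - u_{i+3})/((u_i - u_{i+3})(u_{i+1} - u_{i+2}))`
is an x-integral: its derivative vanishes wherever the denominators are nonzero. -/
theorem riccati_lattice_x_integral
    (u : ℤ → ℝ → ℝ)
    (hdiff : ∀ i : ℤ, Differentiable ℝ (u i))
    (hlat : ∀ (i : ℤ) (x : ℝ),
      deriv (u (i + 1)) x - deriv (u i) x = (u (i + 1) x) ^ 2 - (u i x) ^ 2)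
    (i : ℤ) (x : ℝ)
    (h1 : u i x ≠ u (i + 3) x)
    (h2 : u (i + 1) x ≠ u (i + 2) x) :
    deriv (fun t : ℝ =>
      ((u i t - u (i + 2) t) * (u (i + 1) t - u (i + 3) t)) /
      ((u i t - u (i + 3) t) * (u (i + 1) t - u (i + 2) t))) x = 0 := by
  have hd : ∀ j : ℤ, HasDerivAt (u j) (deriv (u j) x) x :=
    fun j => (hdiff j x).hasDerivAt
  set a := u i x
  set b := u (i + 1) x
  set c := u (i + 2) x
  set d := u (i + 3) x
  set a' := deriv (u i) x
  set b' := deriv (u (i + 1)) x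
  set c' := deriv (u (i + 2)) x
  set d' := deriv (u (i + 3)) x
  -- lattice relations
  have e1 : b' - a' = b ^ 2 - a ^ 2 := hlat i x
  have e2 : c' - b' = c ^ 2 - b ^ 2 := by
    have := hlat (i + 1) x
    norm_num [add_assoc] at this ⊢
    convert this using 3
  have e3 : d' - c' = d ^ 2 - c ^ 2 := by
    have := hlat (i + 2) x
    norm_num [add_assoc] at this ⊢
    convert this using 3
  have hG0 : (a - d) * (b - c) ≠ 0 :=
    mul_ne_zero (sub_ne_zero.mpr h1) (sub_ne_zero.mpr h2)
  have hF : HasDerivAt (fun t : ℝ => (u i t - u (i + 2) t) * (u (i + 1) t - u (i + 3) t))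
      ((a' - c') * (b - d) + (a - c) * (b' - d')) x :=
    ((hd i).sub (hd (i + 2))).mul ((hd (i + 1)).sub (hd (i + 3)))
  have hG : HasDerivAt (fun t : ℝ => (u i t - u (i + 3) t) * (u (i + 1) t - u (i + 2) t))
      ((a' - d') * (b - c) + (a - d) * (b' - c')) x :=
    ((hd i).sub (hd (i + 3))).mul ((hd (i + 1)).sub (hd (i + 2)))
  have hX : deriv (fun t : ℝ => ((u i t - u (i + 2) t) * (u (i + 1) t - u (i + 3) t)) / ((u i t - u (i + 3) t) * (u (i + 1) t - u (i + 2) t))) x = _ := (hF.div hG hG0).deriv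
  rw [hX]
  rw [div_eq_zero_iff]
  left
  have hb : b' = a' + b ^ 2 - a ^ 2 := by linarith
  have hc : c' = a' + c ^ 2 - a ^ 2 := by linarith
  have hdd : d' = a' + d ^ 2 - a ^ 2 := by linarith
  rw [hb, hc, hdd]
  ring
end

section
/- Let ψ : ℝ → ℝ be three times differentiable with ψ'(x) ≠ 0 for all x ∈ ℝ, and let z : ℤ → ℝ be such that z_i ≠ ψ(x) for all i ∈ ℤ and x ∈ ℝ. Define u_i(x) = ψ''(x)/(2ψ'(x)) + ψ'(x)/(z_i − ψ(x)). Then u satisfies the lattice u_{i+1}'(x) − u_i'(x) = u_{i+1}(x)² − u_i(x)² for all i ∈ ℤ and x ∈ ℝ. -/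
/-- The formula `u_i = ψ''/(2ψ') + ψ'/(z_i - ψ)` gives solutions of the coupled
Riccati lattice `u_{i+1,x} - u_{i,x} = u_{i+1}^2 - u_i^2`. -/
theorem riccati_lattice_general_solution
    (ψ : ℝ → ℝ)
    (hψ1 : Differentiable ℝ ψ)
    (hψ2 : Differentiable ℝ (deriv ψ))
    (hψ3 : Differentiable ℝ (deriv (deriv ψ)))
    (hψ' : ∀ x : ℝ, deriv ψ x ≠ 0)
    (z : ℤ → ℝ)
    (hz : ∀ (i : ℤ) (x : ℝ), z i ≠ ψ x)
    (u : ℤ → ℝ → ℝ)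
    (hu : ∀ (i : ℤ) (x : ℝ),
      u i x = deriv (deriv ψ) x / (2 * deriv ψ x) + deriv ψ x / (z i - ψ x)) :
    ∀ (i : ℤ) (x : ℝ),
      deriv (u (i + 1)) x - deriv (u i) x = (u (i + 1) x) ^ 2 - (u i x) ^ 2 := by
  have key : ∀ (i : ℤ) (x : ℝ), HasDerivAt (u i)
      ((deriv (deriv (deriv ψ)) x * (2 * deriv ψ x)
          - deriv (deriv ψ) x * (2 * deriv (deriv ψ) x)) / (2 * deriv ψ x) ^ 2
        + (deriv (deriv ψ) x * (z i - ψ x)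
          - deriv ψ x * (0 - deriv ψ x)) / (z i - ψ x) ^ 2) x := by
    intro i x
    have hfun : u i = fun y => deriv (deriv ψ) y / (2 * deriv ψ y) + deriv ψ y / (z i - ψ y) :=
      funext (hu i)
    rw [hfun]
    have h1 : HasDerivAt (fun y => deriv (deriv ψ) y / (2 * deriv ψ y))
        ((deriv (deriv (deriv ψ)) x * (2 * deriv ψ x)
          - deriv (deriv ψ) x * (2 * deriv (deriv ψ) x)) / (2 * deriv ψ x) ^ 2) x :=
      (hψ3 x).hasDerivAt.div ((hψ2 x).hasDerivAt.const_mul 2)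
        (by simp [hψ' x])
    have h2 : HasDerivAt (fun y => deriv ψ y / (z i - ψ y))
        ((deriv (deriv ψ) x * (z i - ψ x) - deriv ψ x * (0 - deriv ψ x)) / (z i - ψ x) ^ 2) x :=
      (hψ2 x).hasDerivAt.div ((hasDerivAt_const x (z i)).sub (hψ1 x).hasDerivAt)
        (sub_ne_zero.mpr (hz i x))
    exact h1.add h2
  intro i x
  rw [(key (i + 1) x).deriv, (key i x).deriv, hu, hu]
  have hd := hψ' x
  have h1 : z (i + 1) - ψ x ≠ 0 := sub_ne_zero.mpr (hz (i + 1) x)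
  have h2 : z i - ψ x ≠ 0 := sub_ne_zero.mpr (hz i x)
  field_simp
  ring
end

section
/- Let ψ : ℝ → ℝ be three times differentiable with ψ'(x) ≠ 0 for all x ∈ ℝ, let z : ℤ → ℝ with z_i ≠ ψ(x) for all i, x, and define u_i(x) = ψ''(x)/(2ψ'(x)) + ψ'(x)/(z_i − ψ(x)). Then for every i ∈ ℤ and x ∈ ℝ, u_i'(x) − u_i(x)² = (1/2)·(ψ'''(x)/ψ'(x) − (3/2)·ψ''(x)²/ψ'(x)²), i.e. twice the i-integral u_{i,x} − u_i² equals the Schwarzian derivative S_ψ = ψ_{xxx}/ψ_x − (3/2)ψ_{xx}²/ψ_x². -/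
/-- On the general solution `u_i = ψ''/(2ψ') + ψ'/(z_i - ψ)` of the coupled Riccati
lattice, twice the i-integral `I = u_{i,x} - u_i^2` equals the Schwarzian derivative
`S_ψ = ψ'''/ψ' - (3/2) ψ''^2/ψ'^2`. -/
theorem riccati_i_integral_is_schwarzian
    (ψ : ℝ → ℝ)
    (hψ1 : Differentiable ℝ ψ)
    (hψ2 : Differentiable ℝ (deriv ψ))
    (hψ3 : Differentiable ℝ (deriv (deriv ψ)))
    (hψ' : ∀ x : ℝ, deriv ψ x ≠ 0)
    (z : ℤ → ℝ)
    (hz : ∀ (i : ℤ) (x : ℝ), z i ≠ ψ x)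
    (u : ℤ → ℝ → ℝ)
    (hu : ∀ (i : ℤ) (x : ℝ),
      u i x = deriv (deriv ψ) x / (2 * deriv ψ x) + deriv ψ x / (z i - ψ x)) :
    ∀ (i : ℤ) (x : ℝ),
      deriv (u i) x - (u i x) ^ 2 =
        (1 / 2) * (deriv (deriv (deriv ψ)) x / deriv ψ x -
          (3 / 2) * (deriv (deriv ψ) x) ^ 2 / (deriv ψ x) ^ 2) := by
  intro i x
  have h1 : HasDerivAt ψ (deriv ψ x) x := (hψ1 x).hasDerivAt
  have h2 : HasDerivAt (deriv ψ) (deriv (deriv ψ) x) x := (hψ2 x).hasDerivAt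
  have h3 : HasDerivAt (deriv (deriv ψ)) (deriv (deriv (deriv ψ)) x) x := (hψ3 x).hasDerivAt
  have ha : deriv ψ x ≠ 0 := hψ' x
  have hzx : z i - ψ x ≠ 0 := sub_ne_zero.mpr (hz i x)
  have hue : u i = fun y => deriv (deriv ψ) y / (2 * deriv ψ y) + deriv ψ y / (z i - ψ y) :=
    funext (hu i)
  have hd : HasDerivAt (u i)
      ((deriv (deriv (deriv ψ)) x * (2 * deriv ψ x) -
          deriv (deriv ψ) x * (2 * deriv (deriv ψ) x)) / (2 * deriv ψ x) ^ 2 +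
        (deriv (deriv ψ) x * (z i - ψ x) - deriv ψ x * (0 - deriv ψ x)) / (z i - ψ x) ^ 2) x := by
    rw [hue]
    exact (h3.div (h2.const_mul 2) (by simpa using mul_ne_zero two_ne_zero ha)).add
      (h2.div ((hasDerivAt_const x (z i)).sub h1) hzx)
  rw [hd.deriv, hu i]
  field_simp
  ring
end

section
/- Let u : ℤ → ℝ → ℝ be a family of twice differentiable functions satisfying the lattice u_{i+1}'(x)·u_i'(x) = u_{i+1}(x) + u_i(x) for all i ∈ ℤ and x ∈ ℝ, and suppose u_i'(x) ≠ 0 for all i and x. Then for all i ∈ ℤ and x ∈ ℝ, (u_{i+1}''(x) − 1)²/u_{i+1}'(x)² = (u_i''(x) − 1)²/u_i'(x)². -/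
/-- For the lattice `u_{i+1,x} u_{i,x} = u_{i+1} + u_i`, the quantity
`I = (u_{i,xx} - 1)^2 / u_{i,x}^2` is an i-integral. -/
theorem lattice_eg2_i_integral
    (u : ℤ → ℝ → ℝ)
    (hd1 : ∀ i : ℤ, Differentiable ℝ (u i))
    (hd2 : ∀ i : ℤ, Differentiable ℝ (deriv (u i)))
    (hlat : ∀ (i : ℤ) (x : ℝ),
      deriv (u (i + 1)) x * deriv (u i) x = u (i + 1) x + u i x)
    (hne : ∀ (i : ℤ) (x : ℝ), deriv (u i) x ≠ 0) :
    ∀ (i : ℤ) (x : ℝ),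
      (deriv (deriv (u (i + 1))) x - 1) ^ 2 / (deriv (u (i + 1)) x) ^ 2 =
      (deriv (deriv (u i)) x - 1) ^ 2 / (deriv (u i) x) ^ 2 := by
  intro i x
  have h1 : deriv (fun y => deriv (u (i+1)) y * deriv (u i) y) x
      = deriv (fun y => u (i+1) y + u i y) x := by
    congr 1; funext y; exact hlat i y
  rw [deriv_fun_mul ((hd2 _) x) ((hd2 _) x), deriv_fun_add ((hd1 _) x) ((hd1 _) x)] at h1
  have key : deriv (deriv (u (i+1))) x * deriv (u i) x
      + deriv (u (i+1)) x * deriv (deriv (u i)) x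
      = deriv (u (i+1)) x + deriv (u i) x := h1
  have hf := hne (i+1) x
  have hg := hne i x
  field_simp
  linear_combination ((deriv (deriv (u (i+1))) x - 1) * deriv (u i) x
    - (deriv (deriv (u i)) x - 1) * deriv (u (i+1)) x) * key
end

section
/- Let u : ℤ → ℝ → ℝ be a family of differentiable functions satisfying the lattice u_{i+1}'(x)·u_i'(x) = u_{i+1}(x) + u_i(x) for all i ∈ ℤ and x ∈ ℝ, with u_i'(x) ≠ 0 for all i, x. Fix i ∈ ℤ and let x ∈ ℝ be a point where u_{i+2}(x) + u_{i+1}(x) ≠ 0. Then the function X(x) = (u_{i+3}(x) − u_{i+1}(x))(u_{i+2}(x) − u_i(x)) / (u_{i+2}(x) + u_{i+1}(x)) has derivative zero at x. -/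
/-- For the lattice `u_{i+1,x} u_{i,x} = u_{i+1} + u_i`, the quantity
`X = (u_{i+3} - u_{i+1})(u_{i+2} - u_i)/(u_{i+2} + u_{i+1})` is an x-integral. -/
theorem lattice_eg2_x_integral
    (u : ℤ → ℝ → ℝ)
    (hdiff : ∀ i : ℤ, Differentiable ℝ (u i))
    (hlat : ∀ (i : ℤ) (x : ℝ),
      deriv (u (i + 1)) x * deriv (u i) x = u (i + 1) x + u i x)
    (hne : ∀ (i : ℤ) (x : ℝ), deriv (u i) x ≠ 0)
    (i : ℤ) (x : ℝ)
    (hden : u (i + 2) x + u (i + 1) x ≠ 0) :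
    deriv (fun t : ℝ =>
      ((u (i + 3) t - u (i + 1) t) * (u (i + 2) t - u i t)) /
      (u (i + 2) t + u (i + 1) t)) x = 0 := by
  set a := u i x with ha0
  set b := u (i+1) x with hb0
  set c := u (i+2) x with hc0
  set d := u (i+3) x with hd0
  set A := deriv (u i) x with hA0
  set B := deriv (u (i+1)) x with hB0
  set C := deriv (u (i+2)) x with hC0
  set D := deriv (u (i+3)) x with hD0
  have h1 : B * A = b + a := hlat i x
  have h2 : C * B = c + b := by
    have := hlat (i+1) x
    rwa [show i+1+1 = i+2 by ring] at this
  have h3 : D * C = d + c := by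
    have := hlat (i+2) x
    rwa [show i+2+1 = i+3 by ring] at this
  have hB := hne (i+1) x
  have hC := hne (i+2) x
  have hha : HasDerivAt (u i) A x := (hdiff i x).hasDerivAt
  have hhb : HasDerivAt (u (i+1)) B x := (hdiff (i+1) x).hasDerivAt
  have hhc : HasDerivAt (u (i+2)) C x := (hdiff (i+2) x).hasDerivAt
  have hhd : HasDerivAt (u (i+3)) D x := (hdiff (i+3) x).hasDerivAt
  have hX : HasDerivAt (fun t : ℝ =>
      ((u (i + 3) t - u (i + 1) t) * (u (i + 2) t - u i t)) /
      (u (i + 2) t + u (i + 1) t))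
      ((((D - B) * (c - a) + (d - b) * (C - A)) * (c + b) -
        (d - b) * (c - a) * (C + B)) / (c + b)^2) x :=
    ((hhd.sub hhb).mul (hhc.sub hha)).div (hhc.add hhb) hden
  rw [hX.deriv]
  have hN : (((D - B) * (c - a) + (d - b) * (C - A)) * (c + b) -
      (d - b) * (c - a) * (C + B)) * (B * C) = 0 := by
    linear_combination ((c-a)*(c+b)*B)*(h3 - h2) + ((d-b)*(c+b)*C)*(h2-h1)
      - ((d-b)*(c-a)*(C+B))*h2
  have hN0 : (((D - B) * (c - a) + (d - b) * (C - A)) * (c + b) -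
      (d - b) * (c - a) * (C + B)) = 0 :=
    (mul_eq_zero.mp hN).resolve_right (mul_ne_zero hB hC)
  rw [hN0, zero_div]
end

section
/- Let u : ℤ → ℝ → ℝ be a family of twice differentiable functions with u_i(x) ≠ 0 for all i ∈ ℤ and x ∈ ℝ, satisfying the discrete Liouville lattice u_{i+1}'(x)·u_i(x) − u_{i+1}(x)·u_i'(x) = u_{i+1}(x)·u_i(x)·(u_{i+1}(x) + u_i(x)) for all i and x. Then for all i ∈ ℤ and x ∈ ℝ, 2u_{i+1}''(x)/u_{i+1}(x) − 3u_{i+1}'(x)²/u_{i+1}(x)² − u_{i+1}(x)² = 2u_i''(x)/u_i(x) − 3u_i'(x)²/u_i(x)² − u_i(x)². -/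
/-- For the semidiscrete Liouville lattice
`u_{i+1,x} u_i - u_{i+1} u_{i,x} = u_{i+1} u_i (u_{i+1} + u_i)`, the quantity
`I = 2 u_{i,xx}/u_i - 3 u_{i,x}^2/u_i^2 - u_i^2` is an i-integral. -/
theorem discrete_liouville_i_integral
    (u : ℤ → ℝ → ℝ)
    (hd1 : ∀ i : ℤ, Differentiable ℝ (u i))
    (hd2 : ∀ i : ℤ, Differentiable ℝ (deriv (u i)))
    (hne : ∀ (i : ℤ) (x : ℝ), u i x ≠ 0)
    (hlat : ∀ (i : ℤ) (x : ℝ),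
      deriv (u (i + 1)) x * u i x - u (i + 1) x * deriv (u i) x =
        u (i + 1) x * u i x * (u (i + 1) x + u i x)) :
    ∀ (i : ℤ) (x : ℝ),
      2 * deriv (deriv (u (i + 1))) x / u (i + 1) x -
        3 * (deriv (u (i + 1)) x) ^ 2 / (u (i + 1) x) ^ 2 - (u (i + 1) x) ^ 2 =
      2 * deriv (deriv (u i)) x / u i x -
        3 * (deriv (u i) x) ^ 2 / (u i x) ^ 2 - (u i x) ^ 2 := by
  intro i x
  have hv : HasDerivAt (u (i+1)) (deriv (u (i+1)) x) x := (hd1 (i+1) x).hasDerivAt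
  have hv' : HasDerivAt (deriv (u (i+1))) (deriv (deriv (u (i+1))) x) x := (hd2 (i+1) x).hasDerivAt
  have hw : HasDerivAt (u i) (deriv (u i) x) x := (hd1 i x).hasDerivAt
  have hw' : HasDerivAt (deriv (u i)) (deriv (deriv (u i)) x) x := (hd2 i x).hasDerivAt
  have hg : HasDerivAt (fun y => deriv (u (i+1)) y * u i y - u (i+1) y * deriv (u i) y
      - u (i+1) y * u i y * (u (i+1) y + u i y))
      ((deriv (deriv (u (i+1))) x * u i x + deriv (u (i+1)) x * deriv (u i) x)
       - (deriv (u (i+1)) x * deriv (u i) x + u (i+1) x * deriv (deriv (u i)) x)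
       - ((deriv (u (i+1)) x * u i x + u (i+1) x * deriv (u i) x) * (u (i+1) x + u i x)
          + u (i+1) x * u i x * (deriv (u (i+1)) x + deriv (u i) x))) x :=
    ((hv'.mul hw).sub (hv.mul hw')).sub (((hv.mul hw).mul (hv.add hw)))
  have hzero : (fun y => deriv (u (i+1)) y * u i y - u (i+1) y * deriv (u i) y
      - u (i+1) y * u i y * (u (i+1) y + u i y)) = fun _ => (0:ℝ) := by
    funext y; have := hlat i y; linarith
  have hD : (deriv (deriv (u (i+1))) x * u i x + deriv (u (i+1)) x * deriv (u i) x)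
       - (deriv (u (i+1)) x * deriv (u i) x + u (i+1) x * deriv (deriv (u i)) x)
       - ((deriv (u (i+1)) x * u i x + u (i+1) x * deriv (u i) x) * (u (i+1) x + u i x)
          + u (i+1) x * u i x * (deriv (u (i+1)) x + deriv (u i) x)) = 0 := by
    have h0 : HasDerivAt (fun _ : ℝ => (0:ℝ)) 0 x := hasDerivAt_const x 0
    rw [hzero] at hg
    exact hg.unique h0
  have hE := hlat i x
  have hv0 := hne (i+1) x
  have hw0 := hne i x
  field_simp
  linear_combination (2 * u (i+1) x * u i x) * hD +
    (u (i+1) x * u i x * (u (i+1) x - u i x)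
      - 3 * (deriv (u (i+1)) x * u i x + u (i+1) x * deriv (u i) x)) * hE
end

section
/- Let u : ℤ → ℝ → ℝ be a family of differentiable functions with u_i(x) ≠ 0 for all i ∈ ℤ and x ∈ ℝ, satisfying the discrete Liouville lattice u_{i+1}'(x)·u_i(x) − u_{i+1}(x)·u_i'(x) = u_{i+1}(x)·u_i(x)·(u_{i+1}(x) + u_i(x)) for all i and x. Then for each fixed i the function X(x) = (1 + u_i(x)/u_{i+1}(x))·(1 + u_i(x)/u_{i−1}(x)) has derivative zero at every x ∈ ℝ. -/
/-- For the semidiscrete Liouville lattice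
`u_{i+1,x} u_i - u_{i+1} u_{i,x} = u_{i+1} u_i (u_{i+1} + u_i)`, the quantity
`X = (1 + u_i/u_{i+1})(1 + u_i/u_{i-1})` is an x-integral. -/
theorem discrete_liouville_x_integral
    (u : ℤ → ℝ → ℝ)
    (hdiff : ∀ i : ℤ, Differentiable ℝ (u i))
    (hne : ∀ (i : ℤ) (x : ℝ), u i x ≠ 0)
    (hlat : ∀ (i : ℤ) (x : ℝ),
      deriv (u (i + 1)) x * u i x - u (i + 1) x * deriv (u i) x =
        u (i + 1) x * u i x * (u (i + 1) x + u i x)) :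
    ∀ (i : ℤ) (x : ℝ),
      deriv (fun t : ℝ =>
        (1 + u i t / u (i + 1) t) * (1 + u i t / u (i - 1) t)) x = 0 := by
  intro i x
  have ha := (hdiff i x).hasDerivAt
  have hb := (hdiff (i + 1) x).hasDerivAt
  have hc := (hdiff (i - 1) x).hasDerivAt
  have h1 : HasDerivAt (fun t => 1 + u i t / u (i + 1) t)
      ((deriv (u i) x * u (i + 1) x - u i x * deriv (u (i + 1)) x) / (u (i + 1) x) ^ 2) x :=
    by simpa using (ha.div hb (hne (i + 1) x)).const_add 1
  have h2 : HasDerivAt (fun t => 1 + u i t / u (i - 1) t)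
      ((deriv (u i) x * u (i - 1) x - u i x * deriv (u (i - 1)) x) / (u (i - 1) x) ^ 2) x :=
    by simpa using (ha.div hc (hne (i - 1) x)).const_add 1
  have h := (h1.mul h2).deriv
  rw [show (fun t => (1 + u i t / u (i + 1) t) * (1 + u i t / u (i - 1) t)) = ((fun t => 1 + u i t / u (i + 1) t) * fun t => 1 + u i t / u (i - 1) t) from rfl, h]
  have e1 := hlat i x
  have e2 := hlat (i - 1) x
  rw [show i - 1 + 1 = i from by ring] at e2
  have hA := hne i x
  have hB := hne (i + 1) x
  have hC := hne (i - 1) x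
  have k1 : deriv (u i) x * u (i + 1) x - u i x * deriv (u (i + 1)) x =
      -(u (i + 1) x * u i x * (u (i + 1) x + u i x)) := by linarith
  have k2 : deriv (u i) x * u (i - 1) x - u i x * deriv (u (i - 1)) x =
      u i x * u (i - 1) x * (u i x + u (i - 1) x) := by linarith
  rw [k1, k2]
  field_simp
  ring
end

section
/- Let ψ : ℝ → ℝ be twice differentiable and let c : ℤ → ℝ be such that c_i + ψ(x) ≠ 0 for all i ∈ ℤ and x ∈ ℝ. Define u_i(x) = (c_{i+1} − c_i)·ψ'(x) / ((c_{i+1} + ψ(x))·(c_i + ψ(x))). Then u satisfies the discrete Liouville lattice u_{i+1}'(x)·u_i(x) − u_{i+1}(x)·u_i'(x) = u_{i+1}(x)·u_i(x)·(u_{i+1}(x) + u_i(x)) for all i ∈ ℤ and x ∈ ℝ. -/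
lemma deriv_formula_aux (ψ : ℝ → ℝ)
    (hψ1 : Differentiable ℝ ψ)
    (hψ2 : Differentiable ℝ (deriv ψ))
    (a b : ℝ) (hA : ∀ x, a + ψ x ≠ 0) (hB : ∀ x, b + ψ x ≠ 0) (x : ℝ) :
    deriv (fun x => (a - b) * deriv ψ x / ((a + ψ x) * (b + ψ x))) x
      = (a - b) * (deriv (deriv ψ) x * ((a + ψ x) * (b + ψ x))
          - deriv ψ x * deriv ψ x * ((a + ψ x) + (b + ψ x)))
        / (((a + ψ x) * (b + ψ x)) ^ 2) := by
  have hN : HasDerivAt (fun x => (a - b) * deriv ψ x)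
      ((a - b) * deriv (deriv ψ) x) x :=
    ((hψ2 x).hasDerivAt).const_mul _
  have hDa : HasDerivAt (fun x => a + ψ x) (deriv ψ x) x := by
    simpa using (hψ1 x).hasDerivAt.const_add a
  have hDb : HasDerivAt (fun x => b + ψ x) (deriv ψ x) x := by
    simpa using (hψ1 x).hasDerivAt.const_add b
  have hD : HasDerivAt (fun x => (a + ψ x) * (b + ψ x))
      (deriv ψ x * (b + ψ x) + (a + ψ x) * deriv ψ x) x := hDa.mul hDb
  have hne : (a + ψ x) * (b + ψ x) ≠ 0 := mul_ne_zero (hA x) (hB x)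
  have := (hN.div hD hne).deriv
  rw [show (fun x => (a - b) * deriv ψ x / ((a + ψ x) * (b + ψ x))) = (fun x => (a - b) * deriv ψ x) / (fun x => (a + ψ x) * (b + ψ x)) from rfl, this]
  field_simp
  ring

/-- The formula `u_i = (c_{i+1} - c_i) ψ' / ((c_{i+1} + ψ)(c_i + ψ))` gives solutions
of the semidiscrete Liouville lattice. -/
theorem discrete_liouville_general_solution
    (ψ : ℝ → ℝ)
    (hψ1 : Differentiable ℝ ψ)
    (hψ2 : Differentiable ℝ (deriv ψ))
    (c : ℤ → ℝ)
    (hc : ∀ (i : ℤ) (x : ℝ), c i + ψ x ≠ 0)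
    (u : ℤ → ℝ → ℝ)
    (hu : ∀ (i : ℤ) (x : ℝ),
      u i x = (c (i + 1) - c i) * deriv ψ x / ((c (i + 1) + ψ x) * (c i + ψ x))) :
    ∀ (i : ℤ) (x : ℝ),
      deriv (u (i + 1)) x * u i x - u (i + 1) x * deriv (u i) x =
        u (i + 1) x * u i x * (u (i + 1) x + u i x) := by
  intro i x
  have hfun : ∀ j : ℤ, u j = fun x =>
      (c (j + 1) - c j) * deriv ψ x / ((c (j + 1) + ψ x) * (c j + ψ x)) :=
    fun j => funext (hu j)
  have hd : ∀ j : ℤ, deriv (u j) x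
      = (c (j + 1) - c j) * (deriv (deriv ψ) x * ((c (j + 1) + ψ x) * (c j + ψ x))
          - deriv ψ x * deriv ψ x * ((c (j + 1) + ψ x) + (c j + ψ x)))
        / (((c (j + 1) + ψ x) * (c j + ψ x)) ^ 2) := by
    intro j
    rw [hfun j]
    exact deriv_formula_aux ψ hψ1 hψ2 _ _ (hc (j + 1)) (hc j) x
  rw [hd (i + 1), hd i, hu (i + 1) x, hu i x]
  have h1 := hc i x
  have h2 := hc (i + 1) x
  have h3 := hc (i + 1 + 1) x
  field_simp
  ring
end

section
/- Let v : ℤ → ℝ → ℝ be a family of twice differentiable functions with v_i(x) ≠ 0 for all i ∈ ℤ and x ∈ ℝ, satisfying the linear lattice v_{i+1}'(x) = v_i'(x) for all i and x. Define u_i(x) = (v_{i+1}(x) − v_i(x))·v_i'(x) / (v_{i+1}(x)·v_i(x)). Then u satisfies the discrete Liouville lattice u_{i+1}'(x)·u_i(x) − u_{i+1}(x)·u_i'(x) = u_{i+1}(x)·u_i(x)·(u_{i+1}(x) + u_i(x)) for all i ∈ ℤ and x ∈ ℝ. -/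
/-- The substitution `u_i = (v_{i+1} - v_i) v_{i,x} / (v_{i+1} v_i)` maps solutions of
the linear lattice `v_{i+1,x} = v_{i,x}` to solutions of the semidiscrete Liouville
lattice. -/
theorem discrete_liouville_linearization
    (v : ℤ → ℝ → ℝ)
    (hd1 : ∀ i : ℤ, Differentiable ℝ (v i))
    (hd2 : ∀ i : ℤ, Differentiable ℝ (deriv (v i)))
    (hne : ∀ (i : ℤ) (x : ℝ), v i x ≠ 0)
    (hlin : ∀ (i : ℤ) (x : ℝ), deriv (v (i + 1)) x = deriv (v i) x)
    (u : ℤ → ℝ → ℝ)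
    (hu : ∀ (i : ℤ) (x : ℝ),
      u i x = (v (i + 1) x - v i x) * deriv (v i) x / (v (i + 1) x * v i x)) :
    ∀ (i : ℤ) (x : ℝ),
      deriv (u (i + 1)) x * u i x - u (i + 1) x * deriv (u i) x =
        u (i + 1) x * u i x * (u (i + 1) x + u i x) := by
  have hf : ∀ i : ℤ, deriv (v (i + 1)) = deriv (v i) := fun i => funext (hlin i)
  have key : ∀ (j : ℤ) (x : ℝ), deriv (u j) x =
      (((deriv (v j) x - deriv (v j) x) * deriv (v j) x
          + (v (j + 1) x - v j x) * deriv (deriv (v j)) x) * (v (j + 1) x * v j x)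
        - (v (j + 1) x - v j x) * deriv (v j) x *
            (deriv (v j) x * v j x + v (j + 1) x * deriv (v j) x)) /
        (v (j + 1) x * v j x) ^ 2 := by
    intro j x
    have huf : u j = fun y => (v (j + 1) y - v j y) * deriv (v j) y / (v (j + 1) y * v j y) :=
      funext (hu j)
    have hv : HasDerivAt (v j) (deriv (v j) x) x := ((hd1 j) x).hasDerivAt
    have hv1 : HasDerivAt (v (j + 1)) (deriv (v j) x) x := by
      rw [← hlin j x]; exact ((hd1 (j + 1)) x).hasDerivAt
    have hw : HasDerivAt (deriv (v j)) (deriv (deriv (v j)) x) x := ((hd2 j) x).hasDerivAt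
    have hden : v (j + 1) x * v j x ≠ 0 := mul_ne_zero (hne (j + 1) x) (hne j x)
    have H := (((hv1.sub hv).mul hw).div (hv1.mul hv) hden)
    rw [huf]
    exact H.deriv
  intro i x
  rw [key i x, key (i + 1) x, hu i x, hu (i + 1) x]
  simp only [hf]
  have ha := hne (i + 1) x
  have hb := hne i x
  have hc := hne (i + 1 + 1) x
  field_simp
  ring
end

section
/- Let u : ℤ → ℝ → ℝ be a family of differentiable functions satisfying the coupled Riccati lattice u_{i+1}'(x) − u_i'(x) = u_{i+1}(x)² − u_i(x)² for all i ∈ ℤ and x ∈ ℝ. Define ũ_i(x) = u_{i+1}(x) − u_i(x). Then ũ satisfies the discrete Liouville lattice ũ_{i+1}'(x)·ũ_i(x) − ũ_{i+1}(x)·ũ_i'(x) = ũ_{i+1}(x)·ũ_i(x)·(ũ_{i+1}(x) + ũ_i(x)) for all i ∈ ℤ and x ∈ ℝ. -/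
/-- The substitution `ũ_i = u_{i+1} - u_i` maps solutions of the coupled Riccati
lattice `u_{i+1,x} - u_{i,x} = u_{i+1}^2 - u_i^2` to solutions of the semidiscrete
Liouville lattice. -/
theorem riccati_to_discrete_liouville
    (u : ℤ → ℝ → ℝ)
    (hdiff : ∀ i : ℤ, Differentiable ℝ (u i))
    (hlat : ∀ (i : ℤ) (x : ℝ),
      deriv (u (i + 1)) x - deriv (u i) x = (u (i + 1) x) ^ 2 - (u i x) ^ 2)
    (w : ℤ → ℝ → ℝ)
    (hw : ∀ (i : ℤ) (x : ℝ), w i x = u (i + 1) x - u i x) :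
    ∀ (i : ℤ) (x : ℝ),
      deriv (w (i + 1)) x * w i x - w (i + 1) x * deriv (w i) x =
        w (i + 1) x * w i x * (w (i + 1) x + w i x) := by
  intro i x
  have hderiv : ∀ (j : ℤ) (x : ℝ), deriv (w j) x = (u (j + 1) x) ^ 2 - (u j x) ^ 2 := by
    intro j x
    have hwj : w j = fun y => u (j + 1) y - u j y := funext (hw j)
    rw [hwj, deriv_fun_sub ((hdiff (j + 1)).differentiableAt) ((hdiff j).differentiableAt)]
    exact hlat j x
  rw [hderiv, hderiv, hw, hw]
  ring
end

section
/- Let u : ℤ × ℤ → ℝ satisfy u_{i,j} ≠ 0 and u_{i,j} ≠ −1 for all i, j ∈ ℤ, together with the totally discrete Liouville equation u_{i+1,j+1}·(1 + 1/u_{i+1,j})·(1 + 1/u_{i,j+1})·u_{i,j} = 1 for all i, j ∈ ℤ. Then for all i, j ∈ ℤ: (1 + u_{i+1,j}(u_{i+1,j−1} + 1)/u_{i+1,j−1})·(1 + u_{i+1,j}/(u_{i+1,j+1}(u_{i+1,j} + 1))) = (1 + u_{i,j}(u_{i,j−1} + 1)/u_{i,j−1})·(1 + u_{i,j}/(u_{i,j+1}(u_{i,j}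 + 1))). -/
lemma liouville_key (a b c A B C : ℝ)
    (ha : a ≠ 0) (hb : b ≠ 0) (hc : c ≠ 0) (hA : A ≠ 0) (hB : B ≠ 0) (hC : C ≠ 0)
    (hb1 : b + 1 ≠ 0) (hB1 : B + 1 ≠ 0) (hc1 : c + 1 ≠ 0)
    (h1 : B * (1 + 1/A) * (1 + 1/b) * a = 1)
    (h2 : C * (1 + 1/B) * (1 + 1/c) * b = 1) :
    (1 + B * (A + 1) / A) * (1 + B / (C * (B + 1))) =
      (1 + b * (a + 1) / a) * (1 + b / (c * (b + 1))) := by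
  have hCB1 : C * (B + 1) ≠ 0 := mul_ne_zero hC hB1
  have e1 : B * (A + 1) / A = b / ((b + 1) * a) := by
    field_simp at h1 ⊢
    linear_combination h1
  have e2 : B / (C * (B + 1)) = b * (c + 1) / c := by
    have h2' : C * (B + 1) = B * c / ((c + 1) * b) := by
      field_simp at h2 ⊢
      linear_combination h2
    rw [h2']
    field_simp
  rw [e1, e2]
  field_simp
  ring

/-- For the totally discrete Liouville equation
`u_{i+1,j+1}(1 + 1/u_{i+1,j})(1 + 1/u_{i,j+1}) u_{ij} = 1`, the quantity
`I = (1 + u_{ij}(u_{i,j-1}+1)/u_{i,j-1})(1 + u_{ij}/(u_{i,j+1}(u_{ij}+1)))`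
is an i-integral. -/
theorem discrete_liouville3_i_integral
    (u : ℤ → ℤ → ℝ)
    (hne0 : ∀ (i j : ℤ), u i j ≠ 0)
    (hne1 : ∀ (i j : ℤ), u i j ≠ -1)
    (heq : ∀ (i j : ℤ),
      u (i + 1) (j + 1) * (1 + 1 / u (i + 1) j) * (1 + 1 / u i (j + 1)) * u i j = 1) :
    ∀ (i j : ℤ),
      (1 + u (i + 1) j * (u (i + 1) (j - 1) + 1) / u (i + 1) (j - 1)) *
        (1 + u (i + 1) j / (u (i + 1) (j + 1) * (u (i + 1) j + 1))) =
      (1 + u i j * (u i (j - 1) + 1) / u i (j - 1)) *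
        (1 + u i j / (u i (j + 1) * (u i j + 1))) := by
  intro i j
  have h1 := heq i (j - 1)
  rw [show j - 1 + 1 = j from by ring] at h1
  have h2 := heq i j
  have hadd1 : ∀ k l : ℤ, u k l + 1 ≠ 0 := fun k l h => hne1 k l (by linarith)
  exact liouville_key (u i (j-1)) (u i j) (u i (j+1)) (u (i+1) (j-1)) (u (i+1) j)
    (u (i+1) (j+1)) (hne0 _ _) (hne0 _ _) (hne0 _ _) (hne0 _ _) (hne0 _ _) (hne0 _ _)
    (hadd1 _ _) (hadd1 _ _) (hadd1 _ _) h1 h2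
end

section
/- Let u : ℤ × ℤ → ℝ satisfy u_{i,j} ≠ 0 and u_{i,j} ≠ −1 for all i, j ∈ ℤ, together with the totally discrete Liouville equation u_{i+1,j+1}·(1 + 1/u_{i+1,j})·(1 + 1/u_{i,j+1})·u_{i,j} = 1 for all i, j ∈ ℤ. Then for all i, j ∈ ℤ: (1 + u_{i,j+1}(u_{i−1,j+1} + 1)/u_{i−1,j+1})·(1 + u_{i,j+1}/(u_{i+1,j+1}(u_{i,j+1} + 1))) = (1 + u_{i,j}(u_{i−1,j} + 1)/u_{i−1,j})·(1 + u_{i,j}/(u_{i+1,j}(u_{i,j} + 1))). -/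
lemma liouville_key_s12 (a b c d e f : ℝ)
    (ha : a ≠ 0) (hb : b ≠ 0) (hc : c ≠ 0) (hd : d ≠ 0) (he : e ≠ 0) (hf : f ≠ 0)
    (hb1 : b + 1 ≠ 0) (he1 : e + 1 ≠ 0)
    (h1 : e * (1 + 1 / b) * (1 + 1 / a) * c = 1)
    (h2 : f * (1 + 1 / d) * (1 + 1 / e) * b = 1) :
    (1 + e * (a + 1) / a) * (1 + e / (f * (e + 1))) =
      (1 + b * (c + 1) / c) * (1 + b / (d * (b + 1))) := by
  have ha1 : a + 1 ≠ 0 := by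
    intro h
    rw [show (1 : ℝ) + 1 / a = (a + 1) / a by field_simp, h] at h1
    simp at h1
  have hd1 : d + 1 ≠ 0 := by
    intro h
    rw [show (1 : ℝ) + 1 / d = (d + 1) / d by field_simp, h] at h2
    simp at h2
  have H1 : e * (b + 1) * (a + 1) * c = a * b := by
    field_simp at h1; linarith
  have H2 : f * (d + 1) * (e + 1) * b = d * e := by
    field_simp at h2; linarith
  have t1 : 1 + e * (a + 1) / a = (b * c + b + c) / ((b + 1) * c) := by
    have h : e * (a + 1) / a = b / ((b + 1) * c) := by
      rw [div_eq_div_iff ha (mul_ne_zero hb1 hc)]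
      linear_combination H1
    rw [h]
    field_simp
    ring
  have hfe : f * (e + 1) = d * e / ((d + 1) * b) := by
    rw [eq_div_iff (mul_ne_zero hd1 hb)]
    linear_combination H2
  have t2 : 1 + e / (f * (e + 1)) = (b * d + b + d) / d := by
    rw [hfe]
    field_simp
    ring
  have t3 : 1 + b * (c + 1) / c = (b * c + b + c) / c := by
    field_simp; ring
  have t4 : 1 + b / (d * (b + 1)) = (b * d + b + d) / (d * (b + 1)) := by
    field_simp; ring
  rw [t1, t2, t3, t4, div_mul_div_comm, div_mul_div_comm,
    div_eq_div_iff (mul_ne_zero (mul_ne_zero hb1 hc) hd)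
      (mul_ne_zero hc (mul_ne_zero hd hb1))]
  ring

/-- For the totally discrete Liouville equation
`u_{i+1,j+1}(1 + 1/u_{i+1,j})(1 + 1/u_{i,j+1}) u_{ij} = 1`, the quantity
`J = (1 + u_{ij}(u_{i-1,j}+1)/u_{i-1,j})(1 + u_{ij}/(u_{i+1,j}(u_{ij}+1)))`
is a j-integral. -/
theorem discrete_liouville3_j_integral
    (u : ℤ → ℤ → ℝ)
    (hne0 : ∀ (i j : ℤ), u i j ≠ 0)
    (hne1 : ∀ (i j : ℤ), u i j ≠ -1)
    (heq : ∀ (i j : ℤ),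
      u (i + 1) (j + 1) * (1 + 1 / u (i + 1) j) * (1 + 1 / u i (j + 1)) * u i j = 1) :
    ∀ (i j : ℤ),
      (1 + u i (j + 1) * (u (i - 1) (j + 1) + 1) / u (i - 1) (j + 1)) *
        (1 + u i (j + 1) / (u (i + 1) (j + 1) * (u i (j + 1) + 1))) =
      (1 + u i j * (u (i - 1) j + 1) / u (i - 1) j) *
        (1 + u i j / (u (i + 1) j * (u i j + 1))) := by
  intro i j
  have h1 := heq (i - 1) j
  have h2 := heq i j
  rw [show i - 1 + 1 = i by ring] at h1
  have hne1' : ∀ (i j : ℤ), u i j + 1 ≠ 0 := fun i j h => hne1 i j (by linarith)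
  exact liouville_key_s12 (u (i-1) (j+1)) (u i j) (u (i-1) j) (u (i+1) j) (u i (j+1))
    (u (i+1) (j+1)) (hne0 _ _) (hne0 _ _) (hne0 _ _) (hne0 _ _) (hne0 _ _) (hne0 _ _)
    (hne1' _ _) (hne1' _ _) h1 h2
end

section
/- Let v : ℤ × ℤ → ℝ satisfy the linear discrete wave equation v_{i+1,j+1} − v_{i+1,j} − v_{i,j+1} + v_{i,j} = 0 for all i, j ∈ ℤ, with v_{i,j} ≠ 0, v_{i+1,j} ≠ v_{i,j}, and v_{i,j+1} ≠ v_{i,j} for all i, j. Define u_{i,j} = −(v_{i+1,j} − v_{i,j})·(v_{i,j+1} − v_{i,j}) / (v_{i+1,j}·v_{i,j+1}). Then u satisfies the totally discrete Liouville equation u_{i+1,j+1}·(1 + 1/u_{i+1,j})·(1 + 1/u_{i,j+1})·u_{i,j} = 1 for all i, j ∈ ℤ. -/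
set_option maxHeartbeats 1000000

lemma liouville_aux (a b c e f : ℝ)
    (hb : b ≠ 0) (hc : c ≠ 0) (he : e ≠ 0) (hf : f ≠ 0)
    (hD : b + c - a ≠ 0) (hE : e + c - a ≠ 0) (hF : b + f - a ≠ 0)
    (h1 : b - a ≠ 0) (h2 : c - a ≠ 0) (h3 : e - b ≠ 0) (h4 : f - c ≠ 0) :
    (-((e - b) * (f - c)) / ((e + c - a) * (b + f - a))) *
      (1 + 1 / (-((e - b) * (c - a)) / (e * (b + c - a)))) *
      (1 + 1 / (-((b - a) * (f - c)) / ((b + c - a) * f))) *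
      (-((b - a) * (c - a)) / (b * c)) = 1 := by
  field_simp
  ring

/-- The substitution `u_{ij} = -(v_{i+1,j} - v_{ij})(v_{i,j+1} - v_{ij})/(v_{i+1,j} v_{i,j+1})`
maps solutions of the linear discrete wave equation to solutions of the totally discrete
Liouville equation. -/
theorem discrete_liouville3_linearization
    (v : ℤ → ℤ → ℝ)
    (hwave : ∀ (i j : ℤ),
      v (i + 1) (j + 1) - v (i + 1) j - v i (j + 1) + v i j = 0)
    (hne0 : ∀ (i j : ℤ), v i j ≠ 0)
    (hne1 : ∀ (i j : ℤ), v (i + 1) j ≠ v i j)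
    (hne2 : ∀ (i j : ℤ), v i (j + 1) ≠ v i j)
    (u : ℤ → ℤ → ℝ)
    (hu : ∀ (i j : ℤ),
      u i j = -((v (i + 1) j - v i j) * (v i (j + 1) - v i j)) /
        (v (i + 1) j * v i (j + 1))) :
    ∀ (i j : ℤ),
      u (i + 1) (j + 1) * (1 + 1 / u (i + 1) j) * (1 + 1 / u i (j + 1)) * u i j = 1 := by
  intro i j
  set a := v i j with ha'
  set b := v (i + 1) j with hb'
  set c := v i (j + 1) with hc'
  set e := v (i + 1 + 1) j with he'
  set f := v i (j + 1 + 1) with hf'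
  have hd : v (i + 1) (j + 1) = b + c - a := by linarith [hwave i j]
  have he2 : v (i + 1 + 1) (j + 1) = e + c - a := by
    have := hwave (i + 1) j; rw [hd] at this; linarith
  have hf2 : v (i + 1) (j + 1 + 1) = b + f - a := by
    have := hwave i (j + 1); rw [hd] at this; linarith
  have hU11 : u (i + 1) (j + 1) =
      -((e - b) * (f - c)) / ((e + c - a) * (b + f - a)) := by
    rw [hu, he2, hf2, hd]; congr 1 <;> ring
  have hU10 : u (i + 1) j = -((e - b) * (c - a)) / (e * (b + c - a)) := by
    rw [hu, hd]; congr 1 <;> ring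
  have hU01 : u i (j + 1) = -((b - a) * (f - c)) / ((b + c - a) * f) := by
    rw [hu, hd]; congr 1 <;> ring
  have hU00 : u i j = -((b - a) * (c - a)) / (b * c) := by rw [hu]
  rw [hU11, hU10, hU01, hU00]
  exact liouville_aux a b c e f (hne0 _ _) (hne0 _ _) (hne0 _ _) (hne0 _ _)
    (hd ▸ hne0 (i + 1) (j + 1)) (he2 ▸ hne0 (i + 1 + 1) (j + 1))
    (hf2 ▸ hne0 (i + 1) (j + 1 + 1))
    (sub_ne_zero.2 (hne1 i j)) (sub_ne_zero.2 (hne2 i j))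
    (sub_ne_zero.2 (hne1 (i + 1) j)) (sub_ne_zero.2 (hne2 i (j + 1)))
end

section
/- Let c : ℤ → ℝ and k : ℤ → ℝ satisfy c_{i+1} ≠ c_i, k_{j+1} ≠ k_j, and c_i + k_j ≠ 0 for all i, j ∈ ℤ. Define u_{i,j} = −(c_{i+1} − c_i)·(k_{j+1} − k_j) / ((c_{i+1} + k_j)·(c_i + k_{j+1})). Then u satisfies the totally discrete Liouville equation u_{i+1,j+1}·(1 + 1/u_{i+1,j})·(1 + 1/u_{i,j+1})·u_{i,j} = 1 for all i, j ∈ ℤ. -/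
lemma discrete_liouville3_aux (a b d p q r : ℝ)
    (h1 : b - a ≠ 0) (h2 : d - b ≠ 0) (h3 : q - p ≠ 0) (h4 : r - q ≠ 0)
    (s1 : b + p ≠ 0) (s2 : a + q ≠ 0) (s3 : d + q ≠ 0) (s4 : b + r ≠ 0)
    (s5 : d + p ≠ 0) (s6 : b + q ≠ 0) (s7 : a + r ≠ 0) :
    (-((d - b) * (r - q)) / ((d + q) * (b + r))) *
      (1 + 1 / (-((d - b) * (q - p)) / ((d + p) * (b + q)))) *
      (1 + 1 / (-((b - a) * (r - q)) / ((b + q) * (a + r)))) *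
      (-((b - a) * (q - p)) / ((b + p) * (a + q))) = 1 := by
  field_simp
  ring

/-- The formula `u_{ij} = -(c_{i+1} - c_i)(k_{j+1} - k_j)/((c_{i+1} + k_j)(c_i + k_{j+1}))`
gives solutions of the totally discrete Liouville equation. -/
theorem discrete_liouville3_general_solution
    (c : ℤ → ℝ) (k : ℤ → ℝ)
    (hc : ∀ i : ℤ, c (i + 1) ≠ c i)
    (hk : ∀ j : ℤ, k (j + 1) ≠ k j)
    (hck : ∀ (i j : ℤ), c i + k j ≠ 0)
    (u : ℤ → ℤ → ℝ)
    (hu : ∀ (i j : ℤ),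
      u i j = -((c (i + 1) - c i) * (k (j + 1) - k j)) /
        ((c (i + 1) + k j) * (c i + k (j + 1)))) :
    ∀ (i j : ℤ),
      u (i + 1) (j + 1) * (1 + 1 / u (i + 1) j) * (1 + 1 / u i (j + 1)) * u i j = 1 := by
  intro i j
  rw [hu, hu, hu, hu]
  exact discrete_liouville3_aux (c i) (c (i+1)) (c (i+1+1)) (k j) (k (j+1)) (k (j+1+1))
    (sub_ne_zero.mpr (hc i)) (sub_ne_zero.mpr (hc (i+1)))
    (sub_ne_zero.mpr (hk j)) (sub_ne_zero.mpr (hk (j+1)))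
    (hck (i+1) j) (hck i (j+1)) (hck (i+1+1) (j+1)) (hck (i+1) (j+1+1))
    (hck (i+1+1) j) (hck (i+1) (j+1)) (hck i (j+1+1))
end

section
/- Let r : ℤ × ℤ → (ℝ² → ℝ) be a family of C² functions r_{i,j}(x,y) satisfying, for all i, j ∈ ℤ and all (x,y) ∈ ℝ²: ∂_x(r_{i,j} − r_{i+1,j}) = exp(r_{i,j−1} − r_{i,j} − r_{i+1,j} + r_{i+1,j+1}) and ∂_y(r_{i+1,j} − r_{i,j−1}) = exp(r_{i,j} − r_{i+1,j} − r_{i,j−1} + r_{i+1,j−1}). Then the quantity c_{i,j}(x,y) = ∂_x∂_y r_{i,j}(x,y) − exp(r_{i,j+1}(x,y) − 2r_{i,j}(x,y) + r_{i,j−1}(x,y)) is independent of the indices: c_{i,j}(x,y) = c_{i',j'}(x,y) for all i, j, i', j' ∈ ℤ and all (x,y). -/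
open Real

private lemma slice2' {G : ℝ × ℝ → ℝ} (hG : Differentiable ℝ G) (x y : ℝ) :
    HasDerivAt (fun t => G (x, t)) (fderiv ℝ G (x, y) (0, 1)) y :=
  (hG (x, y)).hasFDerivAt.comp_hasDerivAt y
    ((hasDerivAt_const y x).prodMk (hasDerivAt_id y))

private lemma slice1' {G : ℝ × ℝ → ℝ} (hG : Differentiable ℝ G) (x y : ℝ) :
    HasDerivAt (fun s => G (s, y)) (fderiv ℝ G (x, y) (1, 0)) x :=
  (hG (x, y)).hasFDerivAt.comp_hasDerivAt x
    ((hasDerivAt_id x).prodMk (hasDerivAt_const x y))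

private lemma sndslice1 {G : ℝ × ℝ → ℝ} (hG : ContDiff ℝ 2 G) (v : ℝ × ℝ) (x y : ℝ) :
    HasDerivAt (fun s => fderiv ℝ G (s, y) v)
      (fderiv ℝ (fderiv ℝ G) (x, y) (1, 0) v) x := by
  have hf1 : ContDiff ℝ 1 (fderiv ℝ G) := hG.fderiv_right (by norm_num)
  have h2 : HasFDerivAt (fderiv ℝ G) (fderiv ℝ (fderiv ℝ G) (x, y)) (x, y) :=
    ((hf1.differentiable one_ne_zero) (x, y)).hasFDerivAt
  have h3 := h2.clm_apply (hasFDerivAt_const v ((x : ℝ), y))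
  have h4 := h3.comp_hasDerivAt x ((hasDerivAt_id x).prodMk (hasDerivAt_const x y))
  exact h4.congr_deriv (by simp)

private lemma sndslice2 {G : ℝ × ℝ → ℝ} (hG : ContDiff ℝ 2 G) (v : ℝ × ℝ) (x y : ℝ) :
    HasDerivAt (fun t => fderiv ℝ G (x, t) v)
      (fderiv ℝ (fderiv ℝ G) (x, y) (0, 1) v) y := by
  have hf1 : ContDiff ℝ 1 (fderiv ℝ G) := hG.fderiv_right (by norm_num)
  have h2 : HasFDerivAt (fderiv ℝ G) (fderiv ℝ (fderiv ℝ G) (x, y)) (x, y) :=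
    ((hf1.differentiable one_ne_zero) (x, y)).hasFDerivAt
  have h3 := h2.clm_apply (hasFDerivAt_const v ((x : ℝ), y))
  have h4 := h3.comp_hasDerivAt y ((hasDerivAt_const y x).prodMk (hasDerivAt_id y))
  exact h4.congr_deriv (by simp)

private lemma sym' {G : ℝ × ℝ → ℝ} (hG : ContDiff ℝ 2 G) (p v w : ℝ × ℝ) :
    fderiv ℝ (fderiv ℝ G) p v w = fderiv ℝ (fderiv ℝ G) p w v := by
  have h1 : ∀ q, HasFDerivAt G (fderiv ℝ G q) q := fun q =>
    ((hG.differentiable two_ne_zero) q).hasFDerivAt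
  have h2 : HasFDerivAt (fderiv ℝ G) (fderiv ℝ (fderiv ℝ G) p) p :=
    (((hG.fderiv_right (by norm_num)).differentiable one_ne_zero) p).hasFDerivAt
  exact second_derivative_symmetric h1 h2 v w

private lemma mixed_eq {G : ℝ × ℝ → ℝ} (hG : ContDiff ℝ 2 G) (x y : ℝ) :
    deriv (fun s => deriv (fun t => G (s, t)) y) x =
      fderiv ℝ (fderiv ℝ G) (x, y) (1, 0) (0, 1) := by
  have hd := hG.differentiable two_ne_zero
  have h1 : (fun s => deriv (fun t => G (s, t)) y) =
      fun s => fderiv ℝ G (s, y) (0, 1) :=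
    funext fun s => (slice2' hd s y).deriv
  rw [h1]
  exact (sndslice1 hG (0, 1) x y).deriv

section steps
variable (r : ℤ → ℤ → ℝ × ℝ → ℝ)
    (hC2 : ∀ (i j : ℤ), ContDiff ℝ 2 (r i j))
    (hx : ∀ (i j : ℤ) (x y : ℝ),
      deriv (fun t : ℝ => r i j (t, y) - r (i + 1) j (t, y)) x =
        Real.exp (r i (j - 1) (x, y) - r i j (x, y) - r (i + 1) j (x, y) +
          r (i + 1) (j + 1) (x, y)))
    (hy : ∀ (i j : ℤ) (x y : ℝ),
      deriv (fun t : ℝ => r (i + 1) j (x, t) - r i (j - 1) (x, t)) y =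
        Real.exp (r i j (x, y) - r (i + 1) j (x, y) - r i (j - 1) (x, y) +
          r (i + 1) (j - 1) (x, y)))

include hC2 hx in
private lemma hAdiff : ∀ (a b : ℤ) (s t : ℝ),
    fderiv ℝ (r a b) (s, t) (1, 0) - fderiv ℝ (r (a + 1) b) (s, t) (1, 0) =
      Real.exp (r a (b - 1) (s, t) - r a b (s, t) - r (a + 1) b (s, t) +
        r (a + 1) (b + 1) (s, t)) := by
  intro a b s t
  have h := (slice1' ((hC2 a b).differentiable two_ne_zero) s t).sub
    (slice1' ((hC2 (a + 1) b).differentiable two_ne_zero) s t)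
  rw [← h.deriv]
  exact hx a b s t

include hC2 hy in
private lemma hBdiff : ∀ (a b : ℤ) (s t : ℝ),
    fderiv ℝ (r (a + 1) b) (s, t) (0, 1) - fderiv ℝ (r a (b - 1)) (s, t) (0, 1) =
      Real.exp (r a b (s, t) - r (a + 1) b (s, t) - r a (b - 1) (s, t) +
        r (a + 1) (b - 1) (s, t)) := by
  intro a b s t
  have h := (slice2' ((hC2 (a + 1) b).differentiable two_ne_zero) s t).sub
    (slice2' ((hC2 a (b - 1)).differentiable two_ne_zero) s t)
  rw [← h.deriv]
  exact hy a b s t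

include hC2 hx hy in
private lemma step_i (i j : ℤ) (x y : ℝ) :
    deriv (fun s : ℝ => deriv (fun t : ℝ => r i j (s, t)) y) x -
        Real.exp (r i (j + 1) (x, y) - 2 * r i j (x, y) + r i (j - 1) (x, y)) =
      deriv (fun s : ℝ => deriv (fun t : ℝ => r (i + 1) j (s, t)) y) x -
        Real.exp (r (i + 1) (j + 1) (x, y) - 2 * r (i + 1) j (x, y) +
          r (i + 1) (j - 1) (x, y)) := by
  -- LHS function of t and its derivative (∂y∂x)
  have hF : HasDerivAt
      (fun t => fderiv ℝ (r i j) (x, t) (1, 0) - fderiv ℝ (r (i + 1) j) (x, t) (1, 0))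
      (fderiv ℝ (fderiv ℝ (r i j)) (x, y) (0, 1) (1, 0) -
        fderiv ℝ (fderiv ℝ (r (i + 1) j)) (x, y) (0, 1) (1, 0)) y :=
    (sndslice2 (hC2 i j) (1, 0) x y).sub (sndslice2 (hC2 (i + 1) j) (1, 0) x y)
  have hE : HasDerivAt
      (fun t => Real.exp (r i (j - 1) (x, t) - r i j (x, t) - r (i + 1) j (x, t) +
        r (i + 1) (j + 1) (x, t)))
      (Real.exp (r i (j - 1) (x, y) - r i j (x, y) - r (i + 1) j (x, y) +
          r (i + 1) (j + 1) (x, y)) *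
        (fderiv ℝ (r i (j - 1)) (x, y) (0, 1) - fderiv ℝ (r i j) (x, y) (0, 1) -
          fderiv ℝ (r (i + 1) j) (x, y) (0, 1) +
          fderiv ℝ (r (i + 1) (j + 1)) (x, y) (0, 1))) y :=
    ((((slice2' ((hC2 i (j - 1)).differentiable two_ne_zero) x y).sub
        (slice2' ((hC2 i j).differentiable two_ne_zero) x y)).sub
        (slice2' ((hC2 (i + 1) j).differentiable two_ne_zero) x y)).add
        (slice2' ((hC2 (i + 1) (j + 1)).differentiable two_ne_zero) x y)).exp
  have hfg : (fun t => fderiv ℝ (r i j) (x, t) (1, 0) -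
        fderiv ℝ (r (i + 1) j) (x, t) (1, 0)) =
      (fun t => Real.exp (r i (j - 1) (x, t) - r i j (x, t) - r (i + 1) j (x, t) +
        r (i + 1) (j + 1) (x, t))) :=
    funext fun t => hAdiff r hC2 hx i j x t
  have heq := hF.unique (hfg ▸ hE)
  -- B-differences from hy
  have hB1 := hBdiff r hC2 hy i j x y
  have hB2 : fderiv ℝ (r (i + 1) (j + 1)) (x, y) (0, 1) -
      fderiv ℝ (r i j) (x, y) (0, 1) =
      Real.exp (r i (j + 1) (x, y) - r (i + 1) (j + 1) (x, y) - r i j (x, y) +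
        r (i + 1) j (x, y)) := by
    have h := hBdiff r hC2 hy i (j + 1) x y
    simpa using h
  -- rewrite the bracket
  have hfinal :
      fderiv ℝ (fderiv ℝ (r i j)) (x, y) (0, 1) (1, 0) -
        fderiv ℝ (fderiv ℝ (r (i + 1) j)) (x, y) (0, 1) (1, 0) =
      Real.exp (r i (j + 1) (x, y) - 2 * r i j (x, y) + r i (j - 1) (x, y)) -
        Real.exp (r (i + 1) (j + 1) (x, y) - 2 * r (i + 1) j (x, y) +
          r (i + 1) (j - 1) (x, y)) := by
    rw [heq]
    have hbr : fderiv ℝ (r i (j - 1)) (x, y) (0, 1) - fderiv ℝ (r i j) (x, y) (0, 1) -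
        fderiv ℝ (r (i + 1) j) (x, y) (0, 1) +
        fderiv ℝ (r (i + 1) (j + 1)) (x, y) (0, 1) =
        (fderiv ℝ (r (i + 1) (j + 1)) (x, y) (0, 1) - fderiv ℝ (r i j) (x, y) (0, 1)) -
        (fderiv ℝ (r (i + 1) j) (x, y) (0, 1) - fderiv ℝ (r i (j - 1)) (x, y) (0, 1)) := by
      ring
    rw [hbr, hB2, hB1, mul_sub, ← Real.exp_add, ← Real.exp_add]
    congr 1 <;> · congr 1; ring
  rw [mixed_eq (hC2 i j) x y, mixed_eq (hC2 (i + 1) j) x y,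
    ← sym' (hC2 i j) (x, y) (0, 1) (1, 0), ← sym' (hC2 (i + 1) j) (x, y) (0, 1) (1, 0)]
  linarith [hfinal]


include hC2 hx hy in
private lemma step_j (i j : ℤ) (x y : ℝ) :
    deriv (fun s : ℝ => deriv (fun t : ℝ => r (i + 1) j (s, t)) y) x -
        Real.exp (r (i + 1) (j + 1) (x, y) - 2 * r (i + 1) j (x, y) +
          r (i + 1) (j - 1) (x, y)) =
      deriv (fun s : ℝ => deriv (fun t : ℝ => r i (j - 1) (s, t)) y) x -
        Real.exp (r i (j - 1 + 1) (x, y) - 2 * r i (j - 1) (x, y) +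
          r i (j - 1 - 1) (x, y)) := by
  have hF : HasDerivAt
      (fun s => fderiv ℝ (r (i + 1) j) (s, y) (0, 1) - fderiv ℝ (r i (j - 1)) (s, y) (0, 1))
      (fderiv ℝ (fderiv ℝ (r (i + 1) j)) (x, y) (1, 0) (0, 1) -
        fderiv ℝ (fderiv ℝ (r i (j - 1))) (x, y) (1, 0) (0, 1)) x :=
    (sndslice1 (hC2 (i + 1) j) (0, 1) x y).sub (sndslice1 (hC2 i (j - 1)) (0, 1) x y)
  have hE : HasDerivAt
      (fun s => Real.exp (r i j (s, y) - r (i + 1) j (s, y) - r i (j - 1) (s, y) +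
        r (i + 1) (j - 1) (s, y)))
      (Real.exp (r i j (x, y) - r (i + 1) j (x, y) - r i (j - 1) (x, y) +
          r (i + 1) (j - 1) (x, y)) *
        (fderiv ℝ (r i j) (x, y) (1, 0) - fderiv ℝ (r (i + 1) j) (x, y) (1, 0) -
          fderiv ℝ (r i (j - 1)) (x, y) (1, 0) +
          fderiv ℝ (r (i + 1) (j - 1)) (x, y) (1, 0))) x :=
    ((((slice1' ((hC2 i j).differentiable two_ne_zero) x y).sub
        (slice1' ((hC2 (i + 1) j).differentiable two_ne_zero) x y)).sub
        (slice1' ((hC2 i (j - 1)).differentiable two_ne_zero) x y)).add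
        (slice1' ((hC2 (i + 1) (j - 1)).differentiable two_ne_zero) x y)).exp
  have hfg : (fun s => fderiv ℝ (r (i + 1) j) (s, y) (0, 1) -
        fderiv ℝ (r i (j - 1)) (s, y) (0, 1)) =
      (fun s => Real.exp (r i j (s, y) - r (i + 1) j (s, y) - r i (j - 1) (s, y) +
        r (i + 1) (j - 1) (s, y))) :=
    funext fun s => hBdiff r hC2 hy i j s y
  have heq := hF.unique (hfg ▸ hE)
  have hA1 := hAdiff r hC2 hx i j x y
  have hA2 := hAdiff r hC2 hx i (j - 1) x y
  rw [Int.sub_add_cancel] at hA2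
  have hfinal :
      fderiv ℝ (fderiv ℝ (r (i + 1) j)) (x, y) (1, 0) (0, 1) -
        fderiv ℝ (fderiv ℝ (r i (j - 1))) (x, y) (1, 0) (0, 1) =
      Real.exp (r (i + 1) (j + 1) (x, y) - 2 * r (i + 1) j (x, y) +
          r (i + 1) (j - 1) (x, y)) -
        Real.exp (r i (j - 1 + 1) (x, y) - 2 * r i (j - 1) (x, y) +
          r i (j - 1 - 1) (x, y)) := by
    rw [heq]
    have hbr : fderiv ℝ (r i j) (x, y) (1, 0) - fderiv ℝ (r (i + 1) j) (x, y) (1, 0) -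
        fderiv ℝ (r i (j - 1)) (x, y) (1, 0) +
        fderiv ℝ (r (i + 1) (j - 1)) (x, y) (1, 0) =
        (fderiv ℝ (r i j) (x, y) (1, 0) - fderiv ℝ (r (i + 1) j) (x, y) (1, 0)) -
        (fderiv ℝ (r i (j - 1)) (x, y) (1, 0) -
          fderiv ℝ (r (i + 1) (j - 1)) (x, y) (1, 0)) := by ring
    rw [hbr, hA1, hA2, mul_sub, ← Real.exp_add, ← Real.exp_add, Int.sub_add_cancel]
    congr 1 <;> · congr 1; ring
  rw [mixed_eq (hC2 (i + 1) j) x y, mixed_eq (hC2 i (j - 1)) x y]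
  linarith [hfinal]

end steps

private noncomputable def cc (r : ℤ → ℤ → ℝ × ℝ → ℝ) (x y : ℝ) (a b : ℤ) : ℝ :=
  deriv (fun s : ℝ => deriv (fun t : ℝ => r a b (s, t)) y) x -
    Real.exp (r a (b + 1) (x, y) - 2 * r a b (x, y) + r a (b - 1) (x, y))

/-- Cross-differentiation of the Bäcklund transformation of the two-dimensional Toda
lattice shows that each `r_{ij}` satisfies the Toda lattice up to an additive term
`c(x,y)` independent of the indices `i`, `j`. -/
theorem backlund_toda_cross_differentiation
    (r : ℤ → ℤ → ℝ × ℝ → ℝ)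
    (hC2 : ∀ (i j : ℤ), ContDiff ℝ 2 (r i j))
    (hx : ∀ (i j : ℤ) (x y : ℝ),
      deriv (fun t : ℝ => r i j (t, y) - r (i + 1) j (t, y)) x =
        Real.exp (r i (j - 1) (x, y) - r i j (x, y) - r (i + 1) j (x, y) +
          r (i + 1) (j + 1) (x, y)))
    (hy : ∀ (i j : ℤ) (x y : ℝ),
      deriv (fun t : ℝ => r (i + 1) j (x, t) - r i (j - 1) (x, t)) y =
        Real.exp (r i j (x, y) - r (i + 1) j (x, y) - r i (j - 1) (x, y) +
          r (i + 1) (j - 1) (x, y))) :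
    ∀ (i j i' j' : ℤ) (x y : ℝ),
      deriv (fun s : ℝ => deriv (fun t : ℝ => r i j (s, t)) y) x -
          Real.exp (r i (j + 1) (x, y) - 2 * r i j (x, y) + r i (j - 1) (x, y)) =
      deriv (fun s : ℝ => deriv (fun t : ℝ => r i' j' (s, t)) y) x -
          Real.exp (r i' (j' + 1) (x, y) - 2 * r i' j' (x, y) + r i' (j' - 1) (x, y)) := by
  intro i j i' j' x y
  show cc r x y i j = cc r x y i' j'
  have h1 : ∀ a b : ℤ, cc r x y a b = cc r x y (a + 1) b := fun a b =>
    step_i r hC2 hx hy a b x y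
  have h2 : ∀ a b : ℤ, cc r x y (a + 1) b = cc r x y a (b - 1) := fun a b =>
    step_j r hC2 hx hy a b x y
  have hdec : ∀ a b : ℤ, cc r x y a b = cc r x y a (b - 1) := fun a b =>
    (h1 a b).trans (h2 a b)
  have hj : ∀ (a b : ℤ), cc r x y a b = cc r x y a 0 := by
    intro a b
    induction b using Int.induction_on with
    | zero => rfl
    | succ k ih =>
      have h := hdec a (k + 1)
      simp only [Int.add_sub_cancel] at h
      rw [h]; exact ih
    | pred k ih =>
      have h := hdec a (-(k : ℤ))
      rw [← h]; exact ih
  have hi : ∀ a : ℤ, cc r x y a 0 = cc r x y 0 0 := by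
    intro a
    induction a using Int.induction_on with
    | zero => rfl
    | succ k ih => rw [← h1 k 0]; exact ih
    | pred k ih =>
      have h := h1 (-(k : ℤ) - 1) 0
      rw [Int.sub_add_cancel] at h
      rw [h]; exact ih
  rw [hj i j, hi i, ← hi i', ← hj i' j']
end

section
/- Let r : ℤ × ℤ × ℤ → (ℝ → ℝ) be a family of differentiable functions r_{i,j,k}(x) satisfying, for all i, j, k ∈ ℤ and all x ∈ ℝ, the two Bäcklund x-relations (r_{i,j,k} − r_{i+1,j,k})' = exp(r_{i,j−1,k} − r_{i,j,k} − r_{i+1,j,k} + r_{i+1,j+1,k}) and (r_{i,j,k} − r_{i,j,k+1})' = exp(r_{i,j−1,k} − r_{i,j,k} − r_{i,j,k+1} + r_{i,j+1,k+1}). Then the expression E_{i,j,k}(x) = exp(r_{i+1,j−1,k} − r_{i+1,j,k+1} − r_{i,j−1,k} + r_{i,j,k+1}) − exp(r_{i,j−1,k+1} − r_{i+1,j,k+1} − r_{i,j−1,k} + r_{i+1,j,k}) is independent of j: E_{i,j+1,k}(x) = E_{i,j,k}(x) for all i, j, k ∈ ℤ and x ∈ ℝ. -/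
/-- Computing `(r_{ijk} - r_{i+1,j,k+1})_x` in two different ways from the two Bäcklund
x-relations shows that a certain combination of exponentials is annihilated by
`T_j - 1`. -/
theorem backlund_superposition_Tj_invariant
    (r : ℤ → ℤ → ℤ → ℝ → ℝ)
    (hdiff : ∀ (i j k : ℤ), Differentiable ℝ (r i j k))
    (hx1 : ∀ (i j k : ℤ) (x : ℝ),
      deriv (fun t : ℝ => r i j k t - r (i + 1) j k t) x =
        Real.exp (r i (j - 1) k x - r i j k x - r (i + 1) j k x + r (i + 1) (j + 1) k x))
    (hx2 : ∀ (i j k : ℤ) (x : ℝ),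
      deriv (fun t : ℝ => r i j k t - r i j (k + 1) t) x =
        Real.exp (r i (j - 1) k x - r i j k x - r i j (k + 1) x + r i (j + 1) (k + 1) x)) :
    ∀ (i j k : ℤ) (x : ℝ),
      (Real.exp (r (i + 1) ((j + 1) - 1) k x - r (i + 1) (j + 1) (k + 1) x -
          r i ((j + 1) - 1) k x + r i (j + 1) (k + 1) x) -
        Real.exp (r i ((j + 1) - 1) (k + 1) x - r (i + 1) (j + 1) (k + 1) x -
          r i ((j + 1) - 1) k x + r (i + 1) (j + 1) k x)) =
      (Real.exp (r (i + 1) (j - 1) k x - r (i + 1) j (k + 1) x -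
          r i (j - 1) k x + r i j (k + 1) x) -
        Real.exp (r i (j - 1) (k + 1) x - r (i + 1) j (k + 1) x -
          r i (j - 1) k x + r (i + 1) j k x)) := by
  intro i j k x
  -- the pointwise identity from computing the derivative two ways
  have key : Real.exp (r i (j - 1) k x - r i j k x - r (i + 1) j k x + r (i + 1) (j + 1) k x)
      + Real.exp (r (i + 1) (j - 1) k x - r (i + 1) j k x - r (i + 1) j (k + 1) x
          + r (i + 1) (j + 1) (k + 1) x)
      = Real.exp (r i (j - 1) k x - r i j k x - r i j (k + 1) x + r i (j + 1) (k + 1) x)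
      + Real.exp (r i (j - 1) (k + 1) x - r i j (k + 1) x - r (i + 1) j (k + 1) x
          + r (i + 1) (j + 1) (k + 1) x) := by
    have e1 := hx1 i j k x
    have e2 := hx2 (i + 1) j k x
    have e3 := hx2 i j k x
    have e4 := hx1 i j (k + 1) x
    have d1 : deriv (fun t : ℝ =>
          (r i j k t - r (i + 1) j k t) + (r (i + 1) j k t - r (i + 1) j (k + 1) t)) x
        = deriv (fun t : ℝ =>
          (r i j k t - r i j (k + 1) t) + (r i j (k + 1) t - r (i + 1) j (k + 1) t)) x := by
      congr 1
      funext t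
      ring
    rw [deriv_fun_add (f := fun t => r i j k t - r (i + 1) j k t)
          (g := fun t => r (i + 1) j k t - r (i + 1) j (k + 1) t)
          (((hdiff i j k).sub (hdiff (i + 1) j k)).differentiableAt)
          (((hdiff (i + 1) j k).sub (hdiff (i + 1) j (k + 1))).differentiableAt),
        deriv_fun_add (f := fun t => r i j k t - r i j (k + 1) t)
          (g := fun t => r i j (k + 1) t - r (i + 1) j (k + 1) t)
          (((hdiff i j k).sub (hdiff i j (k + 1))).differentiableAt)
          (((hdiff i j (k + 1)).sub (hdiff (i + 1) j (k + 1))).differentiableAt)] at d1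
    rw [e1, e2, e3, e4] at d1
    exact d1
  simp only [add_sub_cancel_right]
  set D : ℝ := r (i + 1) j k x - r (i + 1) (j + 1) (k + 1) x - r i (j - 1) k x + r i j (k + 1) x
    with hD
  rw [show r (i + 1) j k x - r (i + 1) (j + 1) (k + 1) x - r i j k x + r i (j + 1) (k + 1) x
        = D + (r i (j - 1) k x - r i j k x - r i j (k + 1) x + r i (j + 1) (k + 1) x) from by
      rw [hD]; ring,
    show r i j (k + 1) x - r (i + 1) (j + 1) (k + 1) x - r i j k x + r (i + 1) (j + 1) k x
        = D + (r i (j - 1) k x - r i j k x - r (i + 1) j k x + r (i + 1) (j + 1) k x) from by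
      rw [hD]; ring,
    show r (i + 1) (j - 1) k x - r (i + 1) j (k + 1) x - r i (j - 1) k x + r i j (k + 1) x
        = D + (r (i + 1) (j - 1) k x - r (i + 1) j k x - r (i + 1) j (k + 1) x
            + r (i + 1) (j + 1) (k + 1) x) from by rw [hD]; ring,
    show r i (j - 1) (k + 1) x - r (i + 1) j (k + 1) x - r i (j - 1) k x + r (i + 1) j k x
        = D + (r i (j - 1) (k + 1) x - r i j (k + 1) x - r (i + 1) j (k + 1) x
            + r (i + 1) (j + 1) (k + 1) x) from by rw [hD]; ring]
  simp only [Real.exp_add] at key ⊢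
  linear_combination (-(Real.exp D)) * key
end

section
/- Let r : ℤ × ℤ × ℤ → ℝ satisfy the Hirota-type equation exp(r_{i+1,j−1,k} + r_{i,j,k+1}) − exp(r_{i,j−1,k+1} + r_{i+1,j,k}) = exp(r_{i+1,j,k+1} + r_{i,j−1,k}) for all i, j, k ∈ ℤ. Define h_{i,j,k} = exp(r_{i+1,j,k+1} − r_{i,j−1,k+1} − r_{i+1,j,k} + r_{i,j−1,k}). Then h satisfies (h_{i+1,j,k+1} + 1)·(h_{i,j−1,k} + 1) = (h_{i,j−1,k+1}^{−1} + 1)·(h_{i+1,j,k}^{−1} + 1)·h_{i+1,j−1,k}·h_{i,j,k+1} for all i, j, k ∈ ℤ. -/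
/-- The substitution `h_{ijk} = exp(r_{i+1,j,k+1} - r_{i,j-1,k+1} - r_{i+1,j,k} + r_{i,j-1,k})`
maps the Hirota-type equation into the fully discrete Toda lattice for the Laplace
invariants. -/
theorem hirota_to_discrete_toda
    (r : ℤ → ℤ → ℤ → ℝ)
    (heq : ∀ (i j k : ℤ),
      Real.exp (r (i + 1) (j - 1) k + r i j (k + 1)) -
        Real.exp (r i (j - 1) (k + 1) + r (i + 1) j k) =
      Real.exp (r (i + 1) j (k + 1) + r i (j - 1) k))
    (h : ℤ → ℤ → ℤ → ℝ)
    (hh : ∀ (i j k : ℤ),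
      h i j k = Real.exp (r (i + 1) j (k + 1) - r i (j - 1) (k + 1) -
        r (i + 1) j k + r i (j - 1) k)) :
    ∀ (i j k : ℤ),
      (h (i + 1) j (k + 1) + 1) * (h i (j - 1) k + 1) =
        ((h i (j - 1) (k + 1))⁻¹ + 1) * ((h (i + 1) j k)⁻¹ + 1) *
          h (i + 1) (j - 1) k * h i j (k + 1) := by
  have key1 : ∀ i j k : ℤ, h i j k + 1 =
      Real.exp (r (i + 1) (j - 1) k + r i j (k + 1)) /
        Real.exp (r i (j - 1) (k + 1) + r (i + 1) j k) := by
    intro i j k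
    rw [hh, show r (i + 1) j (k + 1) - r i (j - 1) (k + 1) - r (i + 1) j k + r i (j - 1) k
        = (r (i + 1) j (k + 1) + r i (j - 1) k) - (r i (j - 1) (k + 1) + r (i + 1) j k) by ring,
      Real.exp_sub, div_add_one (Real.exp_ne_zero _)]
    congr 1
    rw [← heq i j k]; ring
  have key2 : ∀ i j k : ℤ, (h i j k)⁻¹ + 1 =
      Real.exp (r (i + 1) (j - 1) k + r i j (k + 1)) /
        Real.exp (r (i + 1) j (k + 1) + r i (j - 1) k) := by
    intro i j k
    rw [hh, ← Real.exp_neg,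
      show -(r (i + 1) j (k + 1) - r i (j - 1) (k + 1) - r (i + 1) j k + r i (j - 1) k)
        = (r i (j - 1) (k + 1) + r (i + 1) j k) - (r (i + 1) j (k + 1) + r i (j - 1) k) by ring,
      Real.exp_sub, div_add_one (Real.exp_ne_zero _)]
    congr 1
    rw [← heq i j k]; ring
  intro i j k
  rw [key1, key1, key2, key2, hh, hh]
  rw [div_mul_div_comm, div_mul_div_comm, div_mul_eq_mul_div, div_mul_eq_mul_div,
    div_eq_div_iff (by positivity) (by positivity)]
  simp only [← Real.exp_add]
  rw [Real.exp_eq_exp]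
  ring
end

section
/- Let r : ℤ × ℤ → (ℝ → ℝ) be a family of differentiable functions r_{i,j}(x) satisfying (r_{i,j} − r_{i+1,j})'(x) = exp(r_{i,j−1}(x) − r_{i,j}(x) − r_{i+1,j}(x) + r_{i+1,j+1}(x)) for all i, j ∈ ℤ and x ∈ ℝ, and assume each r_{i,j} is twice differentiable. Define h_{i,j}(x) = (r_{i,j} − r_{i+1,j})'(x), which is positive. Then h satisfies the semidiscrete Toda lattice (log(h_{i,j}/h_{i+1,j}))'(x) = h_{i,j−1}(x) − h_{i,j}(x) − h_{i+1,j}(x) + h_{i+1,j+1}(x) for all i, j ∈ ℤ and x ∈ ℝ. -/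
/-- The substitution `h_{ij} = (r_{ij} - r_{i+1,j})_x` reduces the x-part of the
Bäcklund transformation of the two-dimensional Toda lattice to the semidiscrete Toda
lattice `(log(h_{ij}/h_{i+1,j}))_x = h_{i,j-1} - h_{ij} - h_{i+1,j} + h_{i+1,j+1}`. -/
theorem backlund_to_semidiscrete_toda
    (r : ℤ → ℤ → ℝ → ℝ)
    (hd1 : ∀ (i j : ℤ), Differentiable ℝ (r i j))
    (hd2 : ∀ (i j : ℤ), Differentiable ℝ (deriv (r i j)))
    (hx : ∀ (i j : ℤ) (x : ℝ),
      deriv (fun t : ℝ => r i j t - r (i + 1) j t) x =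
        Real.exp (r i (j - 1) x - r i j x - r (i + 1) j x + r (i + 1) (j + 1) x))
    (h : ℤ → ℤ → ℝ → ℝ)
    (hh : ∀ (i j : ℤ) (x : ℝ),
      h i j x = deriv (fun t : ℝ => r i j t - r (i + 1) j t) x) :
    (∀ (i j : ℤ) (x : ℝ), 0 < h i j x) ∧
    (∀ (i j : ℤ) (x : ℝ),
      deriv (fun t : ℝ => Real.log (h i j t / h (i + 1) j t)) x =
        h i (j - 1) x - h i j x - h (i + 1) j x + h (i + 1) (j + 1) x) := by
  constructor
  · intro i j x
    rw [hh, hx]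
    exact Real.exp_pos _
  · intro i j x
    have key : ∀ (a b : ℤ) (t : ℝ), h a b t = deriv (r a b) t - deriv (r (a + 1) b) t := by
      intro a b t
      rw [hh, deriv_fun_sub ((hd1 a b) t) ((hd1 (a + 1) b) t)]
    have hlog : (fun t => Real.log (h i j t / h (i + 1) j t))
        = fun t => (r i (j - 1) t - r i j t - r (i + 1) j t + r (i + 1) (j + 1) t)
          - (r (i + 1) (j - 1) t - r (i + 1) j t - r (i + 1 + 1) j t
            + r (i + 1 + 1) (j + 1) t) := by
      funext t
      rw [hh i j t, hh (i + 1) j t, hx, hx, ← Real.exp_sub, Real.log_exp]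
    have D : ∀ a b, HasDerivAt (r a b) (deriv (r a b) x) x :=
      fun a b => ((hd1 a b) x).hasDerivAt
    have H := ((((D i (j - 1)).fun_sub (D i j)).fun_sub (D (i + 1) j)).fun_add
        (D (i + 1) (j + 1))).fun_sub
      ((((D (i + 1) (j - 1)).fun_sub (D (i + 1) j)).fun_sub (D (i + 1 + 1) j)).fun_add
        (D (i + 1 + 1) (j + 1)))
    rw [hlog, H.deriv, key i (j - 1) x, key i j x, key (i + 1) j x, key (i + 1) (j + 1) x]
    ring
end
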